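/- If ψ ∈ C²(T⁻) solves □ψ + c·ψ|ψ|^{p-1} = 0 on T⁻, where c(s,y) = (s²-|y|²)^{p-3} and p ≥ 3, then φ := Ω·(ψ∘Φ) ∈ C²(T⁺) solves □φ + φ|φ|^{p-1} = 0 on T⁺, where Ω(t,x) = 1/(t²-|x|²) and Φ(t,x) = (-t,x)/(t²-|x|²). -/

import Mathlib

noncomputable section

abbrev E3 := EuclideanSpace ℝ (Fin 3)

/-- Interior of the forward light cone. -/
def Tplus : Set (ℝ × E3) := {p | ‖p.2‖ < p.1}

/-- Interior of the backward light cone. -/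
def Tminus : Set (ℝ × E3) := {p | ‖p.2‖ < -p.1}

/-- The conformal map `Φ(t,x) = (-t,x)/(t² - |x|²)`. -/
def Phi (p : ℝ × E3) : ℝ × E3 := (p.1 ^ 2 - ‖p.2‖ ^ 2)⁻¹ • (-p.1, p.2)

/-- The conformal factor `Ω(t,x) = 1/(t² - |x|²)`. -/
def Omega (p : ℝ × E3) : ℝ := (p.1 ^ 2 - ‖p.2‖ ^ 2)⁻¹

/-- Partial derivative in time. -/
def pt (f : ℝ × E3 → ℝ) (p : ℝ × E3) : ℝ := fderiv ℝ f p (1, 0)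

/-- Partial derivative in the `i`-th space direction. -/
def px (i : Fin 3) (f : ℝ × E3 → ℝ) (p : ℝ × E3) : ℝ :=
  fderiv ℝ f p (0, EuclideanSpace.single i 1)

/-- The d'Alembertian `□ = ∂ₜ² - Δ` in `3+1` dimensions. -/
def box (f : ℝ × E3 → ℝ) (p : ℝ × E3) : ℝ :=
  pt (pt f) p - ∑ i : Fin 3, px i (px i f) p

/-! Write `η` for the Minkowski form and `u = η(q, q)`, so `Ω = u⁻¹` and `Φ = Ω • J` with `J` the
time reflection. The d'Alembertian is the `η`-trace of the Hessian. Differentiating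
`Ω · (ψ ∘ Φ)` twice gives `Ω³ D²ψ(Φ q)(J·, J·)` plus rank-one terms `η(q, ·) ⊗ ℓ` and a multiple
of `η`, whose traces are `ℓ(q)` and `4`; the contributions not involving `D²ψ` cancel since
`Ω u = 1`, which is the conformal identity `□(Ω · (ψ ∘ Φ)) = Ω³ (□ψ) ∘ Φ`. Since `Φ` maps `T⁺`
into `T⁻` and `η(Φ q, Φ q) = Ω q`, the weight `(s² - |y|²)^(p-3)` becomes `Ω^(p-3)`, and
`Ω³ Ω^(p-3) = Ω Ω^(p-1)` is exactly the scaling of `φ |φ|^(p-1)`. -/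

open ContinuousLinearMap Filter Set Topology

namespace ConformalWave

def minkowski : (ℝ × E3) →L[ℝ] (ℝ × E3) →L[ℝ] ℝ :=
  (ContinuousLinearMap.mul ℝ ℝ).bilinearComp (fst ℝ ℝ E3) (fst ℝ ℝ E3)
    - ((innerSL ℝ : E3 →L[ℝ] E3 →L[ℝ] ℝ).bilinearComp (snd ℝ ℝ E3) (snd ℝ ℝ E3) :
        (ℝ × E3) →L[ℝ] (ℝ × E3) →L[ℝ] ℝ)

local notation "η" => minkowski

@[simp]
lemma minkowski_apply (v w : ℝ × E3) : η v w = v.1 * w.1 - inner ℝ v.2 w.2 := by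
  simp [minkowski]

lemma minkowski_comm (v w : ℝ × E3) : η v w = η w v := by
  simp only [minkowski_apply, mul_comm, real_inner_comm]

lemma minkowski_self (q : ℝ × E3) : η q q = q.1 ^ 2 - ‖q.2‖ ^ 2 := by
  simp [sq]

def timeReflection : (ℝ × E3) →L[ℝ] (ℝ × E3) := (-(fst ℝ ℝ E3)).prod (snd ℝ ℝ E3)

local notation "J" => timeReflection

@[simp]
lemma timeReflection_apply (v : ℝ × E3) : J v = (-v.1, v.2) := rfl

lemma Omega_eq_inv_minkowski (q : ℝ × E3) : Omega q = (η q q)⁻¹ := by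
  rw [minkowski_self]; rfl

lemma Phi_eq_smul (q : ℝ × E3) : Phi q = Omega q • J q := rfl

lemma minkowski_self_Phi (q : ℝ × E3) : η (Phi q) (Phi q) = Omega q := by
  have hJ : η (J q) (J q) = η q q := by simp
  rw [Phi_eq_smul, map_smul, map_smul, smul_apply, hJ, Omega_eq_inv_minkowski, smul_eq_mul, smul_eq_mul]
  rcases eq_or_ne (η q q) 0 with h | h
  · simp [h]
  · field_simp

lemma isOpen_Tminus : IsOpen Tminus := isOpen_lt continuous_snd.norm continuous_fst.neg

lemma minkowski_self_pos_of_mem_Tplus {q : ℝ × E3} (hq : q ∈ Tplus) : 0 < η q q := by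
  have : ‖q.2‖ < q.1 := hq
  rw [minkowski_self]
  nlinarith [norm_nonneg q.2]

lemma mapsTo_Phi : MapsTo Phi Tplus Tminus := by
  intro q hq
  have hΩ : 0 < Omega q := by rw [Omega_eq_inv_minkowski]; exact inv_pos.mpr (minkowski_self_pos_of_mem_Tplus hq)
  have h : ‖q.2‖ < q.1 := hq
  show ‖(Omega q • q.2)‖ < -(Omega q * -q.1)
  rw [norm_smul, Real.norm_of_nonneg hΩ.le]
  nlinarith

def minkowskiTrace (M : ℝ × E3 → ℝ × E3 → ℝ) : ℝ :=
  M (1, 0) (1, 0) - ∑ i, M (0, EuclideanSpace.single i 1) (0, EuclideanSpace.single i 1)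

lemma minkowskiTrace_minkowski_mul (a : ℝ × E3) (f : (ℝ × E3) →L[ℝ] ℝ) :
    minkowskiTrace (fun v w => η a v * f w) = f a := by
  have ha : a = a.1 • ((1 : ℝ), (0 : E3)) + ∑ i, a.2 i • ((0 : ℝ), EuclideanSpace.single i 1) := by
    refine Prod.ext ?_ ?_
    · simp [Prod.fst_sum]
    · simpa [Prod.snd_sum] using ((EuclideanSpace.basisFun (Fin 3) ℝ).sum_repr a.2).symm
  conv_rhs => rw [ha, map_add, map_smul, map_sum]; simp only [map_smul, smul_eq_mul]
  simp [minkowskiTrace, EuclideanSpace.inner_single_right]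

lemma minkowskiTrace_mul_minkowski (a : ℝ × E3) (f : (ℝ × E3) →L[ℝ] ℝ) :
    minkowskiTrace (fun v w => f v * η a w) = f a := by
  simpa only [minkowskiTrace, mul_comm] using minkowskiTrace_minkowski_mul a f

lemma minkowskiTrace_minkowski_mul_apply (a c : ℝ × E3)
    (B : (ℝ × E3) →L[ℝ] (ℝ × E3) →L[ℝ] ℝ) :
    minkowskiTrace (fun v w => η a v * B w c) = B a c :=
  minkowskiTrace_minkowski_mul a (B.flip c)

lemma minkowskiTrace_minkowski : minkowskiTrace (fun v w => η v w) = 4 := by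
  simp [minkowskiTrace]
  norm_num

lemma minkowskiTrace_add (M N : ℝ × E3 → ℝ × E3 → ℝ) :
    minkowskiTrace (fun v w => M v w + N v w) = minkowskiTrace M + minkowskiTrace N := by
  simp only [minkowskiTrace, Finset.sum_add_distrib]
  ring

lemma minkowskiTrace_sub (M N : ℝ × E3 → ℝ × E3 → ℝ) :
    minkowskiTrace (fun v w => M v w - N v w) = minkowskiTrace M - minkowskiTrace N := by
  simp only [minkowskiTrace, Finset.sum_sub_distrib]
  ring

lemma minkowskiTrace_const_mul (c : ℝ) (M : ℝ × E3 → ℝ × E3 → ℝ) :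
    minkowskiTrace (fun v w => c * M v w) = c * minkowskiTrace M := by
  simp only [minkowskiTrace, ← Finset.mul_sum]
  ring

lemma minkowskiTrace_bilinearComp_timeReflection (B : (ℝ × E3) →L[ℝ] (ℝ × E3) →L[ℝ] ℝ) :
    minkowskiTrace (fun v w => B.bilinearComp J J w v) = minkowskiTrace (fun v w => B w v) := by
  have hJ : J ((1 : ℝ), (0 : E3)) = -((1 : ℝ), (0 : E3)) := by simp
  have hJ' (x : E3) : J (0, x) = (0, x) := by simp
  simp only [minkowskiTrace, bilinearComp_apply, hJ, hJ', map_neg, neg_apply, neg_neg]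

lemma box_eq_minkowskiTrace {f : ℝ × E3 → ℝ} {G : ℝ × E3 → ℝ × E3 → ℝ} {q : ℝ × E3}
    (hG : ∀ᶠ r in 𝓝 q, ∀ v, fderiv ℝ f r v = G r v) :
    box f q = minkowskiTrace (fun v w => fderiv ℝ (fun r => G r v) q w) := by
  have hdir (v : ℝ × E3) : fderiv ℝ (fun r => fderiv ℝ f r v) q = fderiv ℝ (fun r => G r v) q :=
    Filter.EventuallyEq.fderiv_eq (hG.mono fun r hr => hr v)
  simp only [box, minkowskiTrace, ← hdir]
  rfl

lemma box_eq_minkowskiTrace_fderiv_fderiv {f : ℝ × E3 → ℝ} {q : ℝ × E3}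
    (hf : DifferentiableAt ℝ (fderiv ℝ f) q) :
    box f q = minkowskiTrace (fun v w => fderiv ℝ (fderiv ℝ f) q w v) := by
  rw [box_eq_minkowskiTrace (.of_forall fun _ _ => rfl)]
  congr! 3 with v w
  rw [(hf.hasFDerivAt.clm_apply (hasFDerivAt_const v q)).fderiv]
  simp

lemma hasFDerivAt_minkowski_self (q : ℝ × E3) :
    HasFDerivAt (fun r => η r r) ((2 : ℝ) • η q) q := by
  refine (minkowski.hasFDerivAt.clm_apply (hasFDerivAt_id q)).congr_fderiv (ext fun v => ?_)
  simp [minkowski_comm v q, two_mul]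

lemma hasFDerivAt_Omega {q : ℝ × E3} (hq : η q q ≠ 0) :
    HasFDerivAt Omega (-(2 * Omega q ^ 2) • η q) q := by
  have h := (hasDerivAt_inv hq).comp_hasFDerivAt (f := fun r => η r r) q
    (hasFDerivAt_minkowski_self q)
  rw [show Omega = fun r => (η r r)⁻¹ from funext Omega_eq_inv_minkowski]
  refine h.congr_fderiv ?_
  rw [smul_smul]
  congr 1
  simp only [inv_pow]
  ring

lemma hasFDerivAt_Phi {q : ℝ × E3} (hq : η q q ≠ 0) :
    HasFDerivAt Phi (Omega q • J + (-(2 * Omega q ^ 2) • η q).smulRight (J q)) q :=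
  (hasFDerivAt_Omega hq).smul timeReflection.hasFDerivAt

def conformalTransform (ψ : ℝ × E3 → ℝ) (q : ℝ × E3) : ℝ := Omega q * ψ (Phi q)

def conformalTransformFDeriv (ψ : ℝ × E3 → ℝ) (r v : ℝ × E3) : ℝ :=
  Omega r ^ 2 * fderiv ℝ ψ (Phi r) (J v)
    - 2 * Omega r ^ 3 * η r v * fderiv ℝ ψ (Phi r) (J r)
    - 2 * Omega r ^ 2 * η r v * ψ (Phi r)

lemma fderiv_conformalTransform_apply {ψ : ℝ × E3 → ℝ} {r : ℝ × E3}
    (hψ : DifferentiableAt ℝ ψ (Phi r)) (hr : η r r ≠ 0) (v : ℝ × E3) :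
    fderiv ℝ (conformalTransform ψ) r v = conformalTransformFDeriv ψ r v := by
  have h := (hasFDerivAt_Omega hr).mul (hψ.hasFDerivAt.comp r (hasFDerivAt_Phi hr))
  rw [show conformalTransform ψ = Omega * (ψ ∘ Phi) from rfl, h.fderiv]
  simp only [conformalTransformFDeriv, Function.comp_apply, add_apply,
    comp_apply, smul_apply, smulRight_apply, map_add, map_smul, smul_eq_mul]
  ring

lemma eventually_fderiv_conformalTransform_apply {ψ : ℝ × E3 → ℝ} {q : ℝ × E3}
    (hψ : ContDiffAt ℝ 1 ψ (Phi q)) (hq : η q q ≠ 0) :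
    ∀ᶠ r in 𝓝 q, ∀ v, fderiv ℝ (conformalTransform ψ) r v = conformalTransformFDeriv ψ r v := by
  have hne : ∀ᶠ r in 𝓝 q, η r r ≠ 0 :=
    (hasFDerivAt_minkowski_self q).continuousAt.eventually_ne hq
  filter_upwards [(hasFDerivAt_Phi hq).continuousAt.eventually (hψ.eventually (by simp)), hne]
    with r hψr hr v
  exact fderiv_conformalTransform_apply (hψr.differentiableAt one_ne_zero) hr v

lemma fderiv_conformalTransformFDeriv_apply {ψ : ℝ × E3 → ℝ} {q : ℝ × E3}
    (hψ : DifferentiableAt ℝ ψ (Phi q)) (hψ' : DifferentiableAt ℝ (fderiv ℝ ψ) (Phi q))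
    (hq : η q q ≠ 0) (v w : ℝ × E3) :
    let Ω := Omega q
    let L := fderiv ℝ ψ (Phi q) ∘L J
    let B := (fderiv ℝ (fderiv ℝ ψ) (Phi q)).bilinearComp J J
    fderiv ℝ (fun r => conformalTransformFDeriv ψ r v) q w =
      (8 * Ω ^ 3 * ψ (Phi q) + 16 * Ω ^ 4 * L q + 4 * Ω ^ 5 * B q q) * (η q v * η q w)
        - (2 * Ω ^ 2 * ψ (Phi q) + 2 * Ω ^ 3 * L q) * η v w
        - 4 * Ω ^ 3 * (η q v * L w) - 4 * Ω ^ 3 * (L v * η q w) + Ω ^ 3 * B w v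
        - 2 * Ω ^ 4 * (η q v * B w q) - 2 * Ω ^ 4 * (B q v * η q w) := by
  intro Ω L B
  have hΩ := hasFDerivAt_Omega hq
  have hΦ := hasFDerivAt_Phi hq
  have hDψ := hψ'.hasFDerivAt.comp q hΦ
  have hLv := hDψ.clm_apply (hasFDerivAt_const (J v) q)
  have hLr := hDψ.clm_apply timeReflection.hasFDerivAt
  have hη := minkowski.hasFDerivAt.clm_apply (hasFDerivAt_const v q)
  have hψΦ := hψ.hasFDerivAt.comp q hΦ
  have h : HasFDerivAt (fun r => conformalTransformFDeriv ψ r v) _ q :=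
    (((hΩ.pow 2).mul hLv).sub ((((hΩ.pow 3).const_mul 2).mul hη).mul hLr)).sub
      ((((hΩ.pow 2).const_mul 2).mul hη).mul hψΦ)
  rw [h.fderiv]
  simp only [Ω, L, B, Function.comp_apply, add_apply, sub_apply, comp_apply, smul_apply,
    smulRight_apply, flip_apply, bilinearComp_apply, zero_apply, map_add, map_smul, map_zero,
    smul_eq_mul, nsmul_eq_mul, Pi.mul_apply, minkowski_comm w v]
  ring

theorem box_conformalTransform {ψ : ℝ × E3 → ℝ} {q : ℝ × E3} (hψ : ContDiffAt ℝ 2 ψ (Phi q))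
    (hq : η q q ≠ 0) : box (conformalTransform ψ) q = Omega q ^ 3 * box ψ (Phi q) := by
  have hψ₁ : DifferentiableAt ℝ ψ (Phi q) := hψ.differentiableAt two_ne_zero
  have hψ₂ : DifferentiableAt ℝ (fderiv ℝ ψ) (Phi q) :=
    (hψ.fderiv_right (m := 1) (by norm_num)).differentiableAt one_ne_zero
  have hΩ : Omega q * η q q = 1 := by rw [Omega_eq_inv_minkowski]; exact inv_mul_cancel₀ hq
  rw [box_eq_minkowskiTrace (eventually_fderiv_conformalTransform_apply (hψ.of_le one_le_two) hq),
    box_eq_minkowskiTrace_fderiv_fderiv hψ₂, ← minkowskiTrace_bilinearComp_timeReflection]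
  simp only [fderiv_conformalTransformFDeriv_apply hψ₁ hψ₂ hq, minkowskiTrace_add,
    minkowskiTrace_sub, minkowskiTrace_const_mul, minkowskiTrace_minkowski_mul,
    minkowskiTrace_mul_minkowski, minkowskiTrace_minkowski_mul_apply, minkowskiTrace_minkowski]
  set L := fderiv ℝ ψ (Phi q) ∘L J
  set B := (fderiv ℝ (fderiv ℝ ψ) (Phi q)).bilinearComp J J
  linear_combination
    (8 * Omega q ^ 2 * ψ (Phi q) + 16 * Omega q ^ 3 * L q + 4 * Omega q ^ 4 * B q q) * hΩ

lemma contDiffOn_conformalTransform {n : WithTop ℕ∞} {ψ : ℝ × E3 → ℝ} {s t : Set (ℝ × E3)}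
    (hψ : ContDiffOn ℝ n ψ s) (hts : MapsTo Phi t s) (ht : ∀ q ∈ t, η q q ≠ 0) :
    ContDiffOn ℝ n (conformalTransform ψ) t := by
  have hΩ : ContDiffOn ℝ n Omega t := by
    rw [show Omega = fun r => (η r r)⁻¹ from funext Omega_eq_inv_minkowski]
    exact (minkowski.contDiff.clm_apply contDiff_id).contDiffOn.inv ht
  have hΦ : ContDiffOn ℝ n Phi t := hΩ.smul timeReflection.contDiff.contDiffOn
  exact hΩ.mul (hψ.comp hΦ hts)

lemma mul_mul_abs_rpow_of_pos {Ω : ℝ} (hΩ : 0 < Ω) (x p : ℝ) :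
    Ω * x * |Ω * x| ^ (p - 1) = Ω ^ 3 * (Ω ^ (p - 3) * x * |x| ^ (p - 1)) := by
  have h : Ω ^ 3 * Ω ^ (p - 3) = Ω * Ω ^ (p - 1) := calc
    Ω ^ 3 * Ω ^ (p - 3) = Ω ^ ((3 : ℝ) + (p - 3)) := by rw [Real.rpow_add hΩ]; norm_cast
    _ = Ω ^ (1 + (p - 1)) := by ring_nf
    _ = Ω * Ω ^ (p - 1) := by rw [Real.rpow_add hΩ, Real.rpow_one]
  rw [abs_mul, abs_of_pos hΩ, Real.mul_rpow hΩ.le (abs_nonneg x)]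
  linear_combination x * |x| ^ (p - 1) * h.symm

end ConformalWave

open ConformalWave

theorem stmt_10_general (p : ℝ) (ψ : ℝ × E3 → ℝ)
    (hψ : ContDiffOn ℝ 2 ψ Tminus)
    (heq : ∀ q ∈ Tminus, box ψ q + (q.1 ^ 2 - ‖q.2‖ ^ 2) ^ (p - 3) * ψ q * |ψ q| ^ (p - 1) = 0) :
    ContDiffOn ℝ 2 (fun q => Omega q * ψ (Phi q)) Tplus ∧
    ∀ q ∈ Tplus,
      box (fun r => Omega r * ψ (Phi r)) q +
        (Omega q * ψ (Phi q)) * |Omega q * ψ (Phi q)| ^ (p - 1) = 0 := by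
  have hpos (q : ℝ × E3) (hq : q ∈ Tplus) : 0 < minkowski q q := minkowski_self_pos_of_mem_Tplus hq
  refine ⟨contDiffOn_conformalTransform hψ mapsTo_Phi fun q hq => (hpos q hq).ne', fun q hq => ?_⟩
  have hz := mapsTo_Phi hq
  have hΩ : 0 < Omega q := by rw [Omega_eq_inv_minkowski]; exact inv_pos.mpr (hpos q hq)
  have h := heq (Phi q) hz
  rw [← minkowski_self, minkowski_self_Phi] at h
  rw [show (fun r => Omega r * ψ (Phi r)) = conformalTransform ψ from rfl,
    box_conformalTransform (hψ.contDiffAt (isOpen_Tminus.mem_nhds hz)) (hpos q hq).ne',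
    mul_mul_abs_rpow_of_pos hΩ]
  linear_combination Omega q ^ 3 * h

/-- If `ψ ∈ C²(T⁻)` solves `□ψ + (s²-|y|²)^{p-3}·ψ|ψ|^{p-1} = 0` on `T⁻` with `p ≥ 3`,
then `φ := Ω·(ψ∘Φ)` is in `C²(T⁺)` and solves `□φ + φ|φ|^{p-1} = 0` on `T⁺`. -/
theorem stmt_10 (p : ℝ) (hp : 3 ≤ p) (ψ : ℝ × E3 → ℝ)
    (hψ : ContDiffOn ℝ 2 ψ Tminus)
    (heq : ∀ q ∈ Tminus, box ψ q + (q.1 ^ 2 - ‖q.2‖ ^ 2) ^ (p - 3) * ψ q * |ψ q| ^ (p - 1) = 0) :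
    ContDiffOn ℝ 2 (fun q => Omega q * ψ (Phi q)) Tplus ∧
    ∀ q ∈ Tplus,
      box (fun r => Omega r * ψ (Phi r)) q +
        (Omega q * ψ (Phi q)) * |Omega q * ψ (Phi q)| ^ (p - 1) = 0 :=
  stmt_10_general p ψ hψ heq
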